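/- arXiv:2002.10940 — 2 statements merged into one kernel-verified Lean document; each statement's English description precedes it below -/
import Mathlib

section
/- Let M ≥ 1, let u_1, …, u_M be real numbers with S = ∑_{m=1}^{M} u_m ≠ 0, and let b > 0 satisfy b ≥ max_m |u_m|. Let û_1, …, û_M be independent random variables with P(û_m = 1) = (b + u_m)/(2b) and P(û_m = −1) = (b − u_m)/(2b). Let s = sign(S). Then: (i) the average wrong-sign probability equals (1/M)·∑_{m=1}^{M} P(û_m ≠ s) = (bM − |S|)/(2bM); and (ii) P(s·∑_{m=1}^{M} û_m ≤ 0) ≤ (1 − x²)^{M/2}, where x = |S|/(bM). -/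
open MeasureTheory ProbabilityTheory Real Finset

/-!
With `s = sign S ∈ {±1}`, the variables `Y_m = s û_m` are independent, `±1`-valued, with
`E[Y_m] = s u_m / b`; their means average to `x`, and `P(û_m ≠ s) = P(Y_m = -1) = (1 - E[Y_m]) / 2`
gives (i). For (ii), the Chernoff bound at `-τ ≤ 0` gives
`P(∑ Y_m ≤ 0) ≤ ∏ E[exp(-τ Y_m)] = ∏ (cosh τ - E[Y_m] sinh τ)`, AM-GM bounds this product by
`(cosh τ - x sinh τ)^M`, and `τ = artanh x` turns the base into `√(1 - x²)`; for `x = 1` one lets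
`τ → ∞` instead.
-/

theorem Real.sign_mul_self_eq_abs (r : ℝ) : Real.sign r * r = |r| := by
  rcases lt_trichotomy r 0 with h | rfl | h
  · rw [sign_of_neg h, abs_of_neg h, neg_one_mul]
  · simp
  · rw [sign_of_pos h, abs_of_pos h, one_mul]

section TwoValued

variable {Ω α : Type*} [MeasurableSpace Ω] {P : Measure Ω} {X : Ω → α} {a c : α}

theorem comp_ae_eq_indicator_add_indicator (hac : a ≠ c) (h : ∀ᵐ ω ∂P, X ω = a ∨ X ω = c)
    (f : α → ℝ) :
    (fun ω => f (X ω)) =ᵐ[P]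
      {ω | X ω = a}.indicator (fun _ => f a) + {ω | X ω = c}.indicator (fun _ => f c) := by
  filter_upwards [h] with ω hω
  rcases hω with hω | hω
  · simp [Set.indicator, hω, hac]
  · simp [Set.indicator, hω, hac.symm]

variable [MeasurableSpace α] [MeasurableSingletonClass α]

theorem ae_eq_or_eq_of_measureReal_add_eq_one [IsProbabilityMeasure P] (hX : Measurable X)
    (hac : a ≠ c) (h : P.real {ω | X ω = a} + P.real {ω | X ω = c} = 1) :
    ∀ᵐ ω ∂P, X ω = a ∨ X ω = c := by
  have hdisj : Disjoint {ω | X ω = a} {ω | X ω = c} :=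
    Set.disjoint_left.mpr fun ω ha hc => hac (ha.symm.trans hc)
  have hmeas : MeasurableSet {ω | X ω = c} := hX (measurableSet_singleton c)
  have hunion : P.real ({ω | X ω = a} ∪ {ω | X ω = c}) = 1 := by
    rw [measureReal_union hdisj hmeas, h]
  exact (mem_ae_iff_prob_eq_one ((hX (measurableSet_singleton a)).union hmeas)).mpr
    ((ENNReal.toReal_eq_one_iff _).mp hunion)

theorem integrable_comp_of_ae_eq_or_eq [IsFiniteMeasure P] (hX : Measurable X) (hac : a ≠ c)
    (h : ∀ᵐ ω ∂P, X ω = a ∨ X ω = c) (f : α → ℝ) : Integrable (fun ω => f (X ω)) P :=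
  (((integrable_const _).indicator (hX (measurableSet_singleton a))).add
    ((integrable_const _).indicator (hX (measurableSet_singleton c)))).congr
    (comp_ae_eq_indicator_add_indicator hac h f).symm

theorem integral_comp_of_ae_eq_or_eq [IsFiniteMeasure P] (hX : Measurable X) (hac : a ≠ c)
    (h : ∀ᵐ ω ∂P, X ω = a ∨ X ω = c) (f : α → ℝ) :
    ∫ ω, f (X ω) ∂P = f a * P.real {ω | X ω = a} + f c * P.real {ω | X ω = c} := by
  have ha : MeasurableSet {ω | X ω = a} := hX (measurableSet_singleton a)
  have hc : MeasurableSet {ω | X ω = c} := hX (measurableSet_singleton c)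
  rw [integral_congr_ae (comp_ae_eq_indicator_add_indicator hac h f), integral_add'
    ((integrable_const _).indicator ha) ((integrable_const _).indicator hc),
    integral_indicator_const _ ha, integral_indicator_const _ hc, smul_eq_mul, smul_eq_mul,
    mul_comm, mul_comm (P.real _)]

end TwoValued

section PlusMinusOne

variable {Ω : Type*} [MeasurableSpace Ω] {P : Measure Ω} [IsProbabilityMeasure P] {Y : Ω → ℝ}

theorem measureReal_setOf_eq_one (hmeas : Measurable Y) (hY : ∀ᵐ ω ∂P, Y ω = 1 ∨ Y ω = -1) :
    P.real {ω | Y ω = 1} = (1 + P[Y]) / 2 := by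
  have htotal := integral_comp_of_ae_eq_or_eq hmeas (by norm_num) hY fun _ => (1 : ℝ)
  have hmean := integral_comp_of_ae_eq_or_eq hmeas (by norm_num) hY id
  simp only [integral_const, probReal_univ, smul_eq_mul, one_mul, id] at htotal hmean
  linarith

theorem measureReal_setOf_ne_one (hmeas : Measurable Y) (hY : ∀ᵐ ω ∂P, Y ω = 1 ∨ Y ω = -1) :
    P.real {ω | Y ω ≠ 1} = (1 - P[Y]) / 2 := by
  have h1 : MeasurableSet {ω | Y ω = 1} := hmeas (measurableSet_singleton 1)
  change P.real {ω | Y ω = 1}ᶜ = _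
  rw [probReal_compl_eq_one_sub h1, measureReal_setOf_eq_one hmeas hY]
  ring

theorem integral_le_one_of_ae_eq_one_or_neg_one (hmeas : Measurable Y)
    (hY : ∀ᵐ ω ∂P, Y ω = 1 ∨ Y ω = -1) : P[Y] ≤ 1 := by
  linarith [measureReal_setOf_eq_one hmeas hY, measureReal_le_one (μ := P) (s := {ω | Y ω = 1})]

theorem mgf_eq_cosh_add_integral_mul_sinh (hmeas : Measurable Y)
    (hY : ∀ᵐ ω ∂P, Y ω = 1 ∨ Y ω = -1) (t : ℝ) :
    mgf Y P t = cosh t + P[Y] * sinh t := by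
  have htotal := integral_comp_of_ae_eq_or_eq hmeas (by norm_num) hY fun _ => (1 : ℝ)
  have hone := measureReal_setOf_eq_one hmeas hY
  simp only [integral_const, probReal_univ, smul_eq_mul, one_mul] at htotal
  rw [mgf, integral_comp_of_ae_eq_or_eq hmeas (by norm_num) hY fun y => exp (t * y),
    cosh_eq, sinh_eq, mul_one, mul_neg_one]
  have : P.real {ω | Y ω = -1} = (1 - P[Y]) / 2 := by linarith
  rw [hone, this]
  ring

end PlusMinusOne

theorem prod_le_arith_mean_pow {ι : Type*} (s : Finset ι) (z : ι → ℝ) (hz : ∀ i ∈ s, 0 ≤ z i) :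
    ∏ i ∈ s, z i ≤ ((∑ i ∈ s, z i) / #s) ^ #s := by
  rcases s.eq_empty_or_nonempty with rfl | hs
  · simp
  have hcard : #s ≠ 0 := hs.card_pos.ne'
  have hamgm := geom_mean_le_arith_mean s (fun _ => 1) z (fun _ _ => zero_le_one)
    (by simpa using hs.card_pos) hz
  simp only [rpow_one, sum_const, nsmul_eq_mul, mul_one, one_mul] at hamgm
  calc ∏ i ∈ s, z i = ((∏ i ∈ s, z i) ^ (#s : ℝ)⁻¹) ^ #s :=
        (rpow_inv_natCast_pow (prod_nonneg hz) hcard).symm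
    _ ≤ ((∑ i ∈ s, z i) / #s) ^ #s := by gcongr; exact rpow_nonneg (prod_nonneg hz) _

theorem le_sqrt_one_sub_sq_pow_of_forall_le {c x : ℝ} {n : ℕ} (hn : n ≠ 0) (hx0 : 0 ≤ x)
    (hx1 : x ≤ 1) (h : ∀ τ, 0 ≤ τ → c ≤ (cosh τ - x * sinh τ) ^ n) :
    c ≤ √(1 - x ^ 2) ^ n := by
  rcases hx1.lt_or_eq with hx1 | rfl
  · have hx : x ∈ Set.Ioo (-1) 1 := ⟨by linarith, hx1⟩
    have hpos : 0 < 1 - x ^ 2 := by nlinarith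
    convert h (artanh x) (artanh_nonneg hx0) using 2
    rw [cosh_artanh hx, sinh_artanh hx]
    field_simp
    rw [sq_sqrt hpos.le]
  · have hlim : Filter.Tendsto (fun τ => (cosh τ - 1 * sinh τ) ^ n) Filter.atTop (nhds 0) := by
      simp_rw [one_mul, cosh_sub_sinh]
      simpa [zero_pow hn] using tendsto_exp_neg_atTop_nhds_zero.pow n
    simpa [zero_pow hn] using
      ge_of_tendsto hlim ((Filter.eventually_ge_atTop 0).mono h)

section SignFamily

variable {Ω ι : Type*} [MeasurableSpace Ω] {P : Measure Ω} [Fintype ι] {Y : ι → Ω → ℝ} {x : ℝ}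

theorem sum_measureReal_setOf_ne_one [IsProbabilityMeasure P] (hmeas : ∀ i, Measurable (Y i))
    (hY : ∀ i, ∀ᵐ ω ∂P, Y i ω = 1 ∨ Y i ω = -1) (hmean : ∑ i, P[Y i] = Fintype.card ι * x) :
    ∑ i, P.real {ω | Y i ω ≠ 1} = Fintype.card ι * (1 - x) / 2 := by
  simp only [measureReal_setOf_ne_one (hmeas _) (hY _), ← sum_div, sum_sub_distrib, hmean,
    sum_const, card_univ, nsmul_eq_mul, mul_one]
  ring

variable [Nonempty ι]

theorem measureReal_sum_nonpos_le_cosh_sub_mul_sinh_pow (hmeas : ∀ i, Measurable (Y i))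
    (hindep : iIndepFun Y P) (hY : ∀ i, ∀ᵐ ω ∂P, Y i ω = 1 ∨ Y i ω = -1)
    (hmean : ∑ i, P[Y i] = Fintype.card ι * x) {τ : ℝ} (hτ : 0 ≤ τ) :
    P.real {ω | ∑ i, Y i ω ≤ 0} ≤ (cosh τ - x * sinh τ) ^ Fintype.card ι := by
  have := hindep.isProbabilityMeasure
  have hint : Integrable (fun ω => exp (-τ * (∑ i, Y i) ω)) P :=
    hindep.integrable_exp_mul_sum hmeas fun i _ =>
      integrable_comp_of_ae_eq_or_eq (hmeas i) (by norm_num) (hY i) fun y => exp (-τ * y)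
  have hcard : (Fintype.card ι : ℝ) ≠ 0 := Nat.cast_ne_zero.mpr Fintype.card_ne_zero
  calc P.real {ω | ∑ i, Y i ω ≤ 0}
      ≤ exp (-(-τ) * 0) * mgf (∑ i, Y i) P (-τ) := by
        simpa only [Finset.sum_apply] using measure_le_le_exp_mul_mgf 0 (neg_nonpos.mpr hτ) hint
    _ = ∏ i, mgf (Y i) P (-τ) := by rw [mul_zero, exp_zero, one_mul, hindep.mgf_sum hmeas]
    _ ≤ ((∑ i, mgf (Y i) P (-τ)) / Fintype.card ι) ^ Fintype.card ι :=
        prod_le_arith_mean_pow _ _ fun i _ => mgf_nonneg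
    _ = (cosh τ - x * sinh τ) ^ Fintype.card ι := by
        simp only [mgf_eq_cosh_add_integral_mul_sinh (hmeas _) (hY _), cosh_neg, sinh_neg,
          sum_add_distrib, sum_const, card_univ, nsmul_eq_mul, mul_neg, sum_neg_distrib,
          ← sum_mul, hmean]
        field_simp
        ring

theorem measureReal_sum_nonpos_le_one_sub_sq_rpow (hmeas : ∀ i, Measurable (Y i))
    (hindep : iIndepFun Y P) (hY : ∀ i, ∀ᵐ ω ∂P, Y i ω = 1 ∨ Y i ω = -1)
    (hmean : ∑ i, P[Y i] = Fintype.card ι * x) (hx : 0 ≤ x) :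
    P.real {ω | ∑ i, Y i ω ≤ 0} ≤ (1 - x ^ 2) ^ ((Fintype.card ι : ℝ) / 2) := by
  have := hindep.isProbabilityMeasure
  have hx1 : x ≤ 1 := by
    have hle : ∑ i, P[Y i] ≤ (Fintype.card ι : ℝ) := by
      simpa only [sum_const, card_univ, nsmul_eq_mul, mul_one] using
        sum_le_sum fun i (_ : i ∈ univ) => integral_le_one_of_ae_eq_one_or_neg_one (hmeas i) (hY i)
    rw [hmean] at hle
    exact le_of_mul_le_mul_left (by simpa using hle) (Nat.cast_pos.mpr Fintype.card_pos)
  rw [rpow_div_two_eq_sqrt _ (by nlinarith), rpow_natCast]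
  exact le_sqrt_one_sub_sq_pow_of_forall_le Fintype.card_ne_zero hx hx1 fun τ hτ =>
    measureReal_sum_nonpos_le_cosh_sub_mul_sinh_pow hmeas hindep hY hmean hτ

end SignFamily

theorem stmt_1_general {Ω : Type*} [MeasurableSpace Ω] (P : Measure Ω) [IsProbabilityMeasure P]
    (M : ℕ) (hM : 1 ≤ M)
    (u : Fin M → ℝ) (S : ℝ) (hS : S = ∑ m, u m) (hS0 : S ≠ 0)
    (b : ℝ) (hb : 0 < b)
    (uhat : Fin M → Ω → ℝ)
    (hmeas : ∀ m, Measurable (uhat m))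
    (hindep : iIndepFun uhat P)
    (h1 : ∀ m, (P {ω | uhat m ω = 1}).toReal = (b + u m) / (2 * b))
    (hneg1 : ∀ m, (P {ω | uhat m ω = -1}).toReal = (b - u m) / (2 * b))
    (s : ℝ) (hs : s = Real.sign S)
    (x : ℝ) (hx : x = |S| / (b * M)) :
    (1 / M) * (∑ m, (P {ω | uhat m ω ≠ s}).toReal) = (b * M - |S|) / (2 * b * M) ∧
    (P {ω | s * ∑ m, uhat m ω ≤ 0}).toReal ≤ (1 - x ^ 2) ^ ((M : ℝ) / 2) := by
  have hs_pm : s = 1 ∨ s = -1 := by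
    rw [hs]; exact (Real.sign_apply_eq_of_ne_zero S hS0).symm
  have hsS : s * S = |S| := hs ▸ Real.sign_mul_self_eq_abs S
  set Y : Fin M → Ω → ℝ := fun m ω => s * uhat m ω with hY_def
  have hY_meas : ∀ m, Measurable (Y m) := fun m => (hmeas m).const_mul s
  have hY_indep : iIndepFun Y P := hindep.comp _ fun _ => measurable_const_mul s
  have huhat_pm : ∀ m, ∀ᵐ ω ∂P, uhat m ω = 1 ∨ uhat m ω = -1 := fun m =>
    ae_eq_or_eq_of_measureReal_add_eq_one (hmeas m) (by norm_num) (by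
      rw [measureReal_def, measureReal_def, h1, hneg1]; field_simp; ring)
  have hY_pm : ∀ m, ∀ᵐ ω ∂P, Y m ω = 1 ∨ Y m ω = -1 := fun m => by
    filter_upwards [huhat_pm m] with ω hω
    rcases hs_pm with h | h <;> rcases hω with hω | hω <;> simp [hY_def, h, hω]
  have hY_mean : ∀ m, P[Y m] = s * u m / b := fun m => by
    rw [integral_comp_of_ae_eq_or_eq (hmeas m) (by norm_num) (huhat_pm m) (s * ·),
      measureReal_def, measureReal_def, h1, hneg1]
    field_simp; ring
  have hY_sum : ∑ m, P[Y m] = Fintype.card (Fin M) * x := by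
    simp only [hY_mean, ← sum_div, ← mul_sum, ← hS, hsS, hx, Fintype.card_fin]
    field_simp
  constructor
  · have hwrong : ∀ m, {ω | uhat m ω ≠ s} = {ω | Y m ω ≠ 1} := fun m => by
      ext ω
      rcases hs_pm with h | h <;> simp [hY_def, h, neg_eq_iff_eq_neg]
    simp only [← measureReal_def, hwrong, sum_measureReal_setOf_ne_one hY_meas hY_pm hY_sum,
      Fintype.card_fin, hx]
    field_simp
  · have hevent : {ω | s * ∑ m, uhat m ω ≤ 0} = {ω | ∑ m, Y m ω ≤ 0} := by
      simp only [hY_def, mul_sum]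
    have : Nonempty (Fin M) := ⟨⟨0, hM⟩⟩
    rw [hevent, ← measureReal_def]
    simpa only [Fintype.card_fin] using measureReal_sum_nonpos_le_one_sub_sq_rpow hY_meas
      hY_indep hY_pm hY_sum (by rw [hx]; positivity)

/-- For the `sto-sign` compressor with parameter `b ≥ max |u_m|` applied to
reals `u_1, …, u_M` with `S = ∑ u_m ≠ 0`:
(i) the average wrong-sign probability equals `(bM - |S|)/(2bM)`, and
(ii) `P(sign(S) · ∑ û_m ≤ 0) ≤ (1 - x²)^(M/2)` with `x = |S|/(bM)`. -/
theorem stmt_1 {Ω : Type*} [MeasurableSpace Ω] (P : Measure Ω) [IsProbabilityMeasure P]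
    (M : ℕ) (hM : 1 ≤ M)
    (u : Fin M → ℝ) (S : ℝ) (hS : S = ∑ m, u m) (hS0 : S ≠ 0)
    (b : ℝ) (hb : 0 < b) (hbu : ∀ m, |u m| ≤ b)
    (uhat : Fin M → Ω → ℝ)
    (hmeas : ∀ m, Measurable (uhat m))
    (hindep : iIndepFun uhat P)
    (h1 : ∀ m, (P {ω | uhat m ω = 1}).toReal = (b + u m) / (2 * b))
    (hneg1 : ∀ m, (P {ω | uhat m ω = -1}).toReal = (b - u m) / (2 * b))
    (s : ℝ) (hs : s = Real.sign S)
    (x : ℝ) (hx : x = |S| / (b * M)) :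
    (1 / M) * (∑ m, (P {ω | uhat m ω ≠ s}).toReal) = (b * M - |S|) / (2 * b * M) ∧
    (P {ω | s * ∑ m, uhat m ω ≤ 0}).toReal ≤ (1 - x ^ 2) ^ ((M : ℝ) / 2) :=
  stmt_1_general P M hM u S hS hS0 b hb uhat hmeas hindep h1 hneg1 s hs x hx
end

section
/- For all real numbers x₁ ≤ 0 and x₂ ≤ 0: Φ(x₁) + Φ(x₂) ≤ 1/2 + Φ(x₁ + x₂), where Φ is the standard normal CDF. -/
open MeasureTheory

/-- The standard normal CDF `Φ(x) = ∫_{-∞}^{x} e^{-t²/2}/√(2π) dt`. -/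
noncomputable def stdGaussianCDF (x : ℝ) : ℝ :=
  (∫ t in Set.Iic x, Real.exp (-(t ^ 2) / 2)) / Real.sqrt (2 * Real.pi)

/-! The inequality says `Φ(x₂) - Φ(x₁ + x₂) ≤ Φ(0) - Φ(x₁)`: both sides integrate the Gaussian
density over an interval of length `-x₁`, and the left interval is the right one translated by
`x₂ ≤ 0`, away from the mode, where the density is smaller. -/

open Set

theorem MonotoneOn.intervalIntegral_shift_le {f : ℝ → ℝ} (hf : MonotoneOn f (Iic 0))
    {a c : ℝ} (ha : a ≤ 0) (hc : c ≤ 0) :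
    ∫ t in (a + c)..c, f t ≤ ∫ t in a..0, f t := by
  have hIcc : uIcc a 0 = Icc a 0 := uIcc_of_le ha
  have hmem : ∀ t ∈ uIcc a 0, t ∈ Iic (0 : ℝ) ∧ t + c ∈ Iic (0 : ℝ) := fun t ht => by
    rw [hIcc] at ht
    exact ⟨ht.2, by simp only [mem_Iic]; linarith [ht.2]⟩
  have hf' : MonotoneOn f (uIcc a 0) := hf.mono fun t ht => (hmem t ht).1
  have hfc : MonotoneOn (fun t => f (t + c)) (uIcc a 0) := fun s hs t ht hst =>
    hf (hmem s hs).2 (hmem t ht).2 (by linarith)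
  rw [show ∫ t in (a + c)..c, f t = ∫ t in a..0, f (t + c) by
    rw [intervalIntegral.integral_comp_add_right, zero_add]]
  exact intervalIntegral.integral_mono_on ha hfc.intervalIntegrable hf'.intervalIntegrable
    fun t ht => hf (hmem t (hIcc ▸ ht)).2 (hmem t (hIcc ▸ ht)).1 (by linarith)

theorem integrable_exp_neg_sq_div_two :
    Integrable (fun t : ℝ => Real.exp (-(t ^ 2) / 2)) := by
  simpa [neg_div, div_eq_inv_mul] using integrable_exp_neg_mul_sq (b := (1 / 2 : ℝ)) (by norm_num)

theorem monotoneOn_exp_neg_sq_div_two :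
    MonotoneOn (fun t : ℝ => Real.exp (-(t ^ 2) / 2)) (Iic 0) := by
  intro s hs t ht hst
  simp only [Real.exp_le_exp]
  nlinarith [mem_Iic.mp hs, mem_Iic.mp ht]

theorem stdGaussianCDF_sub_stdGaussianCDF (a b : ℝ) :
    stdGaussianCDF b - stdGaussianCDF a =
      (∫ t in a..b, Real.exp (-(t ^ 2) / 2)) / Real.sqrt (2 * Real.pi) := by
  rw [stdGaussianCDF, stdGaussianCDF, ← sub_div, intervalIntegral.integral_Iic_sub_Iic
    integrable_exp_neg_sq_div_two.integrableOn integrable_exp_neg_sq_div_two.integrableOn]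

theorem stdGaussianCDF_zero : stdGaussianCDF 0 = 1 / 2 := by
  have hhalf : ∫ t in Iic (0 : ℝ), Real.exp (-(t ^ 2) / 2) = Real.sqrt (2 * Real.pi) / 2 := by
    rw [← neg_zero, ← integral_comp_neg_Ioi]
    convert integral_gaussian_Ioi (1 / 2) using 3 <;> ring_nf
  rw [stdGaussianCDF, hhalf]
  field_simp

/-- Superadditivity of Gaussian probabilities on the negative half-line:
for all `x₁ ≤ 0` and `x₂ ≤ 0`, `Φ(x₁) + Φ(x₂) ≤ 1/2 + Φ(x₁ + x₂)`. -/
theorem stmt_18 (x₁ x₂ : ℝ) (hx₁ : x₁ ≤ 0) (hx₂ : x₂ ≤ 0) :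
    stdGaussianCDF x₁ + stdGaussianCDF x₂ ≤ 1 / 2 + stdGaussianCDF (x₁ + x₂) := by
  have key : stdGaussianCDF x₂ - stdGaussianCDF (x₁ + x₂) ≤
      stdGaussianCDF 0 - stdGaussianCDF x₁ := by
    rw [stdGaussianCDF_sub_stdGaussianCDF, stdGaussianCDF_sub_stdGaussianCDF]
    gcongr
    exact monotoneOn_exp_neg_sq_div_two.intervalIntegral_shift_le hx₁ hx₂
  linarith [stdGaussianCDF_zero]
end
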